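/- arXiv:nlin/0606059 — 5 statements merged into one kernel-verified Lean document; each statement's English description precedes it below -/
import Mathlib

section
/- Let τ satisfy Fay-like identity (A). Then for all s, x, y and all nonzero complex numbers λ, μ one has 𝗌w⁺(s,x,y;λ) − (1 − λ/μ)·𝗌w⁺(s, x−ℏ[μ⁻¹], y; λ) = λ·v⁺(s,x,y;μ)·𝗌w⁺(s+ℏ, x, y; λ). (This is the relation X[μ]𝗌w⁺ = v⁺(μ)·λe^{ℏ∂ₛ}𝗌w⁺ of computation I in the proof that the Fay-like identities imply the Toda lattice hierarchy, with the exponential factor e^{ξ(x,λ)} cancelled.) -/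
noncomputable section

/-- `shift ℏ x μ` is the sequence `x − ℏ[μ]`, where `[μ]ₙ = μⁿ/n`. -/
def shift (h : ℂ) (x : ℕ+ → ℂ) (μ : ℂ) : ℕ+ → ℂ :=
  fun n => x n - h * (μ ^ (n : ℕ) / (n : ℂ))

/-- Fay-like identity (A). -/
def FayA (h : ℂ) (τ : ℂ → (ℕ+ → ℂ) → (ℕ+ → ℂ) → ℂ) : Prop :=
  ∀ (s : ℂ) (x y : ℕ+ → ℂ) (μ₁ μ₂ : ℂ), μ₁ ≠ 0 → μ₂ ≠ 0 →
    μ₂ * τ s (shift h x μ₁⁻¹) y * τ (s + h) (shift h x μ₂⁻¹) y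
      - μ₁ * τ s (shift h x μ₂⁻¹) y * τ (s + h) (shift h x μ₁⁻¹) y
    = (μ₂ - μ₁) * τ (s + h) x y * τ s (shift h (shift h x μ₁⁻¹) μ₂⁻¹) y

/-- Fay-like identity (B). -/
def FayB (h : ℂ) (τ : ℂ → (ℕ+ → ℂ) → (ℕ+ → ℂ) → ℂ) : Prop :=
  ∀ (s : ℂ) (x y : ℕ+ → ℂ) (ν₁ ν₂ : ℂ), ν₁ ≠ 0 → ν₂ ≠ 0 →
    (ν₁ - ν₂) * τ s x y * τ (s + h) x (shift h (shift h y ν₁) ν₂)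
    = ν₁ * τ (s + h) x (shift h y ν₁) * τ s x (shift h y ν₂)
      - ν₂ * τ (s + h) x (shift h y ν₂) * τ s x (shift h y ν₁)

/-- Fay-like identity (C). -/
def FayC (h : ℂ) (τ : ℂ → (ℕ+ → ℂ) → (ℕ+ → ℂ) → ℂ) : Prop :=
  ∀ (s : ℂ) (x y : ℕ+ → ℂ) (μ ν : ℂ), μ ≠ 0 → ν ≠ 0 →
    μ * (τ s (shift h x μ⁻¹) y * τ s x (shift h y ν)
          - τ s x y * τ s (shift h x μ⁻¹) (shift h y ν))
    = ν * τ (s + h) x (shift h y ν) * τ (s - h) (shift h x μ⁻¹) y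

/-- `𝗌w⁺(s,x,y;λ) = τ(s; x−ℏ[λ⁻¹], y)/τ(s+ℏ; x, y)`. -/
def swp (h : ℂ) (τ : ℂ → (ℕ+ → ℂ) → (ℕ+ → ℂ) → ℂ)
    (s : ℂ) (x y : ℕ+ → ℂ) (lam : ℂ) : ℂ :=
  τ s (shift h x lam⁻¹) y / τ (s + h) x y

/-- `𝘄⁻(s,x,y;λ) = τ(s+ℏ; x, y−ℏ[λ])/τ(s+ℏ; x, y)`. -/
def swm (h : ℂ) (τ : ℂ → (ℕ+ → ℂ) → (ℕ+ → ℂ) → ℂ)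
    (s : ℂ) (x y : ℕ+ → ℂ) (lam : ℂ) : ℂ :=
  τ (s + h) x (shift h y lam) / τ (s + h) x y

/-- `w̃⁺(s,x,y;λ) = τ(s; x−ℏ[λ⁻¹], y)/τ(s; x, y)`. -/
def wtp (h : ℂ) (τ : ℂ → (ℕ+ → ℂ) → (ℕ+ → ℂ) → ℂ)
    (s : ℂ) (x y : ℕ+ → ℂ) (lam : ℂ) : ℂ :=
  τ s (shift h x lam⁻¹) y / τ s x y

/-- `w̃⁻(s,x,y;λ) = τ(s+ℏ; x, y−ℏ[λ])/τ(s; x, y)`. -/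
def wtm (h : ℂ) (τ : ℂ → (ℕ+ → ℂ) → (ℕ+ → ℂ) → ℂ)
    (s : ℂ) (x y : ℕ+ → ℂ) (lam : ℂ) : ℂ :=
  τ (s + h) x (shift h y lam) / τ s x y

/-- `v⁺(s,x,y;μ)`. -/
def vp (h : ℂ) (τ : ℂ → (ℕ+ → ℂ) → (ℕ+ → ℂ) → ℂ)
    (s : ℂ) (x y : ℕ+ → ℂ) (μ : ℂ) : ℂ :=
  μ⁻¹ * τ s (shift h x μ⁻¹) y * τ (s + 2 * h) x y
    / (τ (s + h) x y * τ (s + h) (shift h x μ⁻¹) y)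

/-- `v⁻(s,x,y;ν)`. -/
def vm (h : ℂ) (τ : ℂ → (ℕ+ → ℂ) → (ℕ+ → ℂ) → ℂ)
    (s : ℂ) (x y : ℕ+ → ℂ) (ν : ℂ) : ℂ :=
  ν * τ (s + h) x (shift h y ν) * τ (s - h) x y
    / (τ s x y * τ s x (shift h y ν))

/-!
Fay identity (A) with `μ₁ = λ`, `μ₂ = μ`, divided by `μ·τ(s+ℏ; x)·τ(s+ℏ; x−ℏ[μ⁻¹])`, is the claim:
the factor `τ(s+2ℏ; x)` cancels between `v⁺` and `𝗌w⁺(s+ℏ)`, and the two shifts of `x` commute.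
-/

theorem shift_shift_comm (h : ℂ) (x : ℕ+ → ℂ) (a b : ℂ) :
    shift h (shift h x a) b = shift h (shift h x b) a := by
  funext n
  simp only [shift]
  ring

theorem div_sub_mul_div_eq_of_fay {K : Type*} [Field K] {a b c d e f g lam μ : K}
    (hb : b ≠ 0) (hd : d ≠ 0) (he : e ≠ 0) (hμ : μ ≠ 0)
    (hfay : μ * a * d - lam * g * f = (μ - lam) * b * c) :
    a / b - (1 - lam / μ) * (c / d) = lam * (μ⁻¹ * g * e / (b * d)) * (f / e) := by
  field_simp
  linear_combination hfay

theorem fay_A_implies_computation_I_general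
    (h : ℂ)
    (τ : ℂ → (ℕ+ → ℂ) → (ℕ+ → ℂ) → ℂ) (hτ : ∀ s x y, τ s x y ≠ 0)
    (hA : FayA h τ)
    (s : ℂ) (x y : ℕ+ → ℂ) (lam μ : ℂ) (hlam : lam ≠ 0) (hμ : μ ≠ 0) :
    swp h τ s x y lam - (1 - lam / μ) * swp h τ s (shift h x μ⁻¹) y lam
      = lam * vp h τ s x y μ * swp h τ (s + h) x y lam := by
  unfold swp vp
  rw [shift_shift_comm, add_assoc, ← two_mul]
  exact div_sub_mul_div_eq_of_fay (hτ _ _ _) (hτ _ _ _) (hτ _ _ _) hμ (hA s x y lam μ hlam hμ)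

/-- Computation I: `X[μ]𝗌w⁺ = v⁺(μ)·λe^{ℏ∂ₛ}𝗌w⁺`. -/
theorem fay_A_implies_computation_I
    (h : ℂ) (hh : h ≠ 0)
    (τ : ℂ → (ℕ+ → ℂ) → (ℕ+ → ℂ) → ℂ) (hτ : ∀ s x y, τ s x y ≠ 0)
    (hA : FayA h τ)
    (s : ℂ) (x y : ℕ+ → ℂ) (lam μ : ℂ) (hlam : lam ≠ 0) (hμ : μ ≠ 0) :
    swp h τ s x y lam - (1 - lam / μ) * swp h τ s (shift h x μ⁻¹) y lam
      = lam * vp h τ s x y μ * swp h τ (s + h) x y lam :=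
  fay_A_implies_computation_I_general h τ hτ hA s x y lam μ hlam hμ
end
end

section
/- Let τ satisfy Fay-like identity (C). Then for all s, x, y and all nonzero complex numbers λ, μ one has 𝘄⁻(s,x,y;λ) − 𝘄⁻(s, x−ℏ[μ⁻¹], y; λ) = λ·v⁺(s,x,y;μ)·𝘄⁻(s+ℏ, x, y; λ). (This is the relation X[μ]𝘄⁻ = v⁺(μ)·λe^{ℏ∂ₛ}𝘄⁻ of computation II in the proof that the Fay-like identities imply the Toda lattice hierarchy.) -/
noncomputable section

/-!
Evaluate identity (C) at `s + ℏ` with `ν = λ`. Divided by `μ·τ(s+ℏ; x, y)·τ(s+ℏ; x−ℏ[μ⁻¹], y)`,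
its left side becomes the difference of the two `𝘄⁻`, and its right side, after inserting
`τ(s+2ℏ; x, y)/τ(s+2ℏ; x, y)`, becomes `λ·v⁺(μ)·𝘄⁻(s+ℏ)`.
-/

section

variable {h : ℂ} {τ : ℂ → (ℕ+ → ℂ) → (ℕ+ → ℂ) → ℂ}

theorem FayC.at_add (hC : FayC h τ) (s : ℂ) (x y : ℕ+ → ℂ) {μ ν : ℂ} (hμ : μ ≠ 0)
    (hν : ν ≠ 0) :
    μ * (τ (s + h) (shift h x μ⁻¹) y * τ (s + h) x (shift h y ν)
          - τ (s + h) x y * τ (s + h) (shift h x μ⁻¹) (shift h y ν))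
    = ν * τ (s + 2 * h) x (shift h y ν) * τ s (shift h x μ⁻¹) y := by
  have := hC (s + h) x y μ ν hμ hν
  rwa [add_assoc, ← two_mul, add_sub_cancel_right] at this

theorem swm_sub_swm_shift (hτ : ∀ s x y, τ s x y ≠ 0) (s : ℂ) (x y : ℕ+ → ℂ) (lam μ : ℂ) :
    swm h τ s x y lam - swm h τ s (shift h x μ⁻¹) y lam
      = (τ (s + h) (shift h x μ⁻¹) y * τ (s + h) x (shift h y lam)
          - τ (s + h) x y * τ (s + h) (shift h x μ⁻¹) (shift h y lam))
        / (τ (s + h) x y * τ (s + h) (shift h x μ⁻¹) y) := by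
  rw [swm, swm, div_sub_div _ _ (hτ _ _ _) (hτ _ _ _)]
  ring

theorem vp_mul_swm_add (hτ : ∀ s x y, τ s x y ≠ 0) (s : ℂ) (x y : ℕ+ → ℂ) (lam μ : ℂ) :
    vp h τ s x y μ * swm h τ (s + h) x y lam
      = μ⁻¹ * τ s (shift h x μ⁻¹) y * τ (s + 2 * h) x (shift h y lam)
        / (τ (s + h) x y * τ (s + h) (shift h x μ⁻¹) y) := by
  rw [vp, swm, add_assoc, ← two_mul]
  field_simp [hτ (s + 2 * h) x y]

end

theorem fay_C_implies_computation_II_general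
    (h : ℂ)
    (τ : ℂ → (ℕ+ → ℂ) → (ℕ+ → ℂ) → ℂ) (hτ : ∀ s x y, τ s x y ≠ 0)
    (hC : FayC h τ)
    (s : ℂ) (x y : ℕ+ → ℂ) (lam μ : ℂ) (hlam : lam ≠ 0) (hμ : μ ≠ 0) :
    swm h τ s x y lam - swm h τ s (shift h x μ⁻¹) y lam
      = lam * vp h τ s x y μ * swm h τ (s + h) x y lam := by
  have hfay := hC.at_add s x y hμ hlam
  rw [swm_sub_swm_shift hτ, mul_assoc, vp_mul_swm_add hτ, mul_div_assoc']
  congr 1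
  rw [← inv_mul_cancel_left₀ hμ (_ - _), hfay]
  ring

/-- Computation II: `X[μ]𝘄⁻ = v⁺(μ)·λe^{ℏ∂ₛ}𝘄⁻`. -/
theorem fay_C_implies_computation_II
    (h : ℂ) (hh : h ≠ 0)
    (τ : ℂ → (ℕ+ → ℂ) → (ℕ+ → ℂ) → ℂ) (hτ : ∀ s x y, τ s x y ≠ 0)
    (hC : FayC h τ)
    (s : ℂ) (x y : ℕ+ → ℂ) (lam μ : ℂ) (hlam : lam ≠ 0) (hμ : μ ≠ 0) :
    swm h τ s x y lam - swm h τ s (shift h x μ⁻¹) y lam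
      = lam * vp h τ s x y μ * swm h τ (s + h) x y lam :=
  fay_C_implies_computation_II_general h τ hτ hC s x y lam μ hlam hμ
end
end

section
/- Let τ satisfy Fay-like identity (C). Then for all s, x, y and all nonzero complex numbers λ, ν one has w̃⁺(s,x,y;λ) − w̃⁺(s, x, y−ℏ[ν]; λ) = λ⁻¹·v⁻(s,x,y;ν)·w̃⁺(s−ℏ, x, y; λ). (This is the relation Y[ν]w̃⁺ = v⁻(ν)·λ⁻¹e^{−ℏ∂ₛ}w̃⁺ of computation III in the proof that the Fay-like identities imply the Toda lattice hierarchy.) -/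
noncomputable section

/-- Computation III is Fay (C) at `(s, x, y; λ, ν)` divided by `λ·τ(s;x,y)·τ(s;x,y−ℏ[ν])`. -/
theorem fayC_at_iff_wtp_sub_wtp_shift {h : ℂ} {τ : ℂ → (ℕ+ → ℂ) → (ℕ+ → ℂ) → ℂ}
    {s : ℂ} {x y : ℕ+ → ℂ} {lam ν : ℂ} (hlam : lam ≠ 0) (hτ : τ s x y ≠ 0)
    (hτν : τ s x (shift h y ν) ≠ 0) (hτh : τ (s - h) x y ≠ 0) :
    lam * (τ s (shift h x lam⁻¹) y * τ s x (shift h y ν)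
          - τ s x y * τ s (shift h x lam⁻¹) (shift h y ν))
        = ν * τ (s + h) x (shift h y ν) * τ (s - h) (shift h x lam⁻¹) y ↔
      wtp h τ s x y lam - wtp h τ s x (shift h y ν) lam
        = lam⁻¹ * vm h τ s x y ν * wtp h τ (s - h) x y lam := by
  have hrhs : lam⁻¹ * vm h τ s x y ν * wtp h τ (s - h) x y lam
      = ν * τ (s + h) x (shift h y ν) * τ (s - h) (shift h x lam⁻¹) y
        / (lam * (τ s x y * τ s x (shift h y ν))) := by
    unfold vm wtp
    field_simp
  rw [wtp, wtp, div_sub_div _ _ hτ hτν, hrhs,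
    div_eq_div_iff (mul_ne_zero hτ hτν) (mul_ne_zero hlam (mul_ne_zero hτ hτν)),
    ← mul_left_inj' (mul_ne_zero hτ hτν)]
  ring_nf

theorem fay_C_implies_computation_III_general
    (h : ℂ)
    (τ : ℂ → (ℕ+ → ℂ) → (ℕ+ → ℂ) → ℂ) (hτ : ∀ s x y, τ s x y ≠ 0)
    (hC : FayC h τ)
    (s : ℂ) (x y : ℕ+ → ℂ) (lam ν : ℂ) (hlam : lam ≠ 0) (hν : ν ≠ 0) :
    wtp h τ s x y lam - wtp h τ s x (shift h y ν) lam
      = lam⁻¹ * vm h τ s x y ν * wtp h τ (s - h) x y lam :=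
  (fayC_at_iff_wtp_sub_wtp_shift hlam (hτ _ _ _) (hτ _ _ _) (hτ _ _ _)).mp
    (hC s x y lam ν hlam hν)

/-- Computation III: `Y[ν]w̃⁺ = v⁻(ν)·λ⁻¹e^{−ℏ∂ₛ}w̃⁺`. -/
theorem fay_C_implies_computation_III
    (h : ℂ) (hh : h ≠ 0)
    (τ : ℂ → (ℕ+ → ℂ) → (ℕ+ → ℂ) → ℂ) (hτ : ∀ s x y, τ s x y ≠ 0)
    (hC : FayC h τ)
    (s : ℂ) (x y : ℕ+ → ℂ) (lam ν : ℂ) (hlam : lam ≠ 0) (hν : ν ≠ 0) :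
    wtp h τ s x y lam - wtp h τ s x (shift h y ν) lam
      = lam⁻¹ * vm h τ s x y ν * wtp h τ (s - h) x y lam :=
  fay_C_implies_computation_III_general h τ hτ hC s x y lam ν hlam hν
end
end

section
/- Let τ satisfy Fay-like identity (B). Then for all s, x, y and all nonzero complex numbers λ, ν one has w̃⁻(s,x,y;λ) − (1 − ν/λ)·w̃⁻(s, x, y−ℏ[ν]; λ) = λ⁻¹·v⁻(s,x,y;ν)·w̃⁻(s−ℏ, x, y; λ). (This is the relation Y[ν]w̃⁻ = v⁻(ν)·λ⁻¹e^{−ℏ∂ₛ}w̃⁻ of computation IV in the proof that the Fay-like identities imply the Toda lattice hierarchy, with the exponential factor e^{ξ(y,λ⁻¹)} cancelled.) -/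
noncomputable section

theorem shift_shift_comm_s3 (h : ℂ) (y : ℕ+ → ℂ) (μ ν : ℂ) :
    shift h (shift h y μ) ν = shift h (shift h y ν) μ := by
  funext n
  simp only [shift]
  ring

/-- Fay (B) with `ν₁ = λ`, `ν₂ = ν`, divided by `λ · τ(s; y) · τ(s; y − ℏ[ν])`. -/
theorem FayB.wtm_sub_mul_wtm_shift {h : ℂ} {τ : ℂ → (ℕ+ → ℂ) → (ℕ+ → ℂ) → ℂ}
    (hB : FayB h τ) {s : ℂ} {x y : ℕ+ → ℂ} {lam ν : ℂ} (hlam : lam ≠ 0) (hν : ν ≠ 0)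
    (hτ : τ s x y ≠ 0) (hτν : τ s x (shift h y ν) ≠ 0) :
    wtm h τ s x y lam - (1 - ν / lam) * wtm h τ s x (shift h y ν) lam
      = lam⁻¹ * (ν * τ (s + h) x (shift h y ν) * τ s x (shift h y lam)
          / (τ s x y * τ s x (shift h y ν))) := by
  have fay := hB s x y lam ν hlam hν
  rw [shift_shift_comm_s3] at fay
  simp only [wtm]
  field_simp
  linear_combination -fay

theorem vm_mul_wtm_sub (h : ℂ) (τ : ℂ → (ℕ+ → ℂ) → (ℕ+ → ℂ) → ℂ) (s : ℂ) (x y : ℕ+ → ℂ)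
    (ν lam : ℂ) (hτ : τ (s - h) x y ≠ 0) :
    vm h τ s x y ν * wtm h τ (s - h) x y lam
      = ν * τ (s + h) x (shift h y ν) * τ s x (shift h y lam)
          / (τ s x y * τ s x (shift h y ν)) := by
  simp only [vm, wtm, sub_add_cancel]
  field_simp

theorem fay_B_implies_computation_IV_general
    (h : ℂ)
    (τ : ℂ → (ℕ+ → ℂ) → (ℕ+ → ℂ) → ℂ) (hτ : ∀ s x y, τ s x y ≠ 0)
    (hB : FayB h τ)
    (s : ℂ) (x y : ℕ+ → ℂ) (lam ν : ℂ) (hlam : lam ≠ 0) (hν : ν ≠ 0) :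
    wtm h τ s x y lam - (1 - ν / lam) * wtm h τ s x (shift h y ν) lam
      = lam⁻¹ * vm h τ s x y ν * wtm h τ (s - h) x y lam := by
  rw [mul_assoc, vm_mul_wtm_sub h τ s x y ν lam (hτ _ _ _)]
  exact hB.wtm_sub_mul_wtm_shift hlam hν (hτ _ _ _) (hτ _ _ _)

/-- Computation IV: `Y[ν]w̃⁻ = v⁻(ν)·λ⁻¹e^{−ℏ∂ₛ}w̃⁻`. -/
theorem fay_B_implies_computation_IV
    (h : ℂ) (hh : h ≠ 0)
    (τ : ℂ → (ℕ+ → ℂ) → (ℕ+ → ℂ) → ℂ) (hτ : ∀ s x y, τ s x y ≠ 0)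
    (hB : FayB h τ)
    (s : ℂ) (x y : ℕ+ → ℂ) (lam ν : ℂ) (hlam : lam ≠ 0) (hν : ν ≠ 0) :
    wtm h τ s x y lam - (1 - ν / lam) * wtm h τ s x (shift h y ν) lam
      = lam⁻¹ * vm h τ s x y ν * wtm h τ (s - h) x y lam :=
  fay_B_implies_computation_IV_general h τ hτ hB s x y lam ν hlam hν
end
end

section
/- Let τ satisfy Fay-like identities (A) and (C). Fix a nonzero complex number μ and define, for nonzero λ, the twisted difference operator (X_{μ,λ}f)(s,x,y) := f(s,x,y) − (1−λ/μ)·f(s, x−ℏ[μ⁻¹], y) and the untwisted difference operator (X_μ g)(s,x,y) := g(s,x,y) − g(s, x−ℏ[μ⁻¹], y). Then for every n ≥ 1 there exist functions q_{n,1}, …, q_{n,n} of (s, x, y), independent of λ, such that for all nonzero λ simultaneously: (X_{μ,λ})ⁿ𝗌w⁺(s,x,y;λ) = Σ_{k=1}^{n} q_{n,k}(s,x,y)·λᵏ·𝗌w⁺(s+kℏ, x, y; λ) and (X_μ)ⁿ𝘄⁻(s,x,y;λ) = Σ_{k=1}^{n} q_{n,k}(s,x,y)·λᵏ·𝘄⁻(s+kℏ,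 x, y; λ), with the same coefficient functions q_{n,k} in both relations. -/
noncomputable section

/-- The twisted difference operator `X_{μ,λ}`. -/
def Xtw (h μ lam : ℂ) (f : ℂ → (ℕ+ → ℂ) → (ℕ+ → ℂ) → ℂ) :
    ℂ → (ℕ+ → ℂ) → (ℕ+ → ℂ) → ℂ :=
  fun s x y => f s x y - (1 - lam / μ) * f s (shift h x μ⁻¹) y

/-- The untwisted difference operator `X_μ`. -/
def Xun (h μ : ℂ) (g : ℂ → (ℕ+ → ℂ) → (ℕ+ → ℂ) → ℂ) :
    ℂ → (ℕ+ → ℂ) → (ℕ+ → ℂ) → ℂ :=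
  fun s x y => g s x y - g s (shift h x μ⁻¹) y

/-
Both Fay identities say that `𝗌w⁺` and `𝘄⁻` solve the same first-order relation
`D W = λ · v⁺(s, x, y; μ) · W(s + ℏ)`, where `D f = f − t · f(x − ℏ[μ⁻¹])` is the difference
operator with twist `t = 1 − λ/μ` for `𝗌w⁺` (identity (A)) and `t = 1` for `𝘄⁻` (identity (C)).
Iterating with the Leibniz rule `D (q g) = (q − q(x − ℏ[μ⁻¹])) g + q(x − ℏ[μ⁻¹]) · D g`
produces `Dⁿ W = ∑ₖ qₙₖ λᵏ W(s + kℏ)`, where the coefficients obey a recursion involving only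
`v⁺` and the untwisted difference, hence do not depend on `λ`, on the twist, or on `W`.
-/

open Finset Function

section TwistedDifference

variable {X Y : Type*} (σ : X → X)

def twistedDiff (t : ℂ) (f : ℂ → X → Y → ℂ) : ℂ → X → Y → ℂ :=
  fun s x y => f s x y - t * f s (σ x) y

lemma twistedDiff_one_const (c : ℂ) : twistedDiff σ 1 (fun _ (_ : X) (_ : Y) => c) = 0 := by
  funext s x y
  simp [twistedDiff]

def expansionCoeff (v : ℂ → X → Y → ℂ) (h : ℂ) : ℕ → ℕ → ℂ → X → Y → ℂ
  | 0, 0 => fun _ _ _ => 1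
  | 0, _ + 1 => fun _ _ _ => 0
  | n + 1, 0 => twistedDiff σ 1 (expansionCoeff v h n 0)
  | n + 1, k + 1 => fun s x y =>
      twistedDiff σ 1 (expansionCoeff v h n (k + 1)) s x y
        + expansionCoeff v h n k s (σ x) y * v (s + k * h) x y

variable {σ}

lemma expansionCoeff_eq_zero_of_lt (v : ℂ → X → Y → ℂ) (h : ℂ) {n k : ℕ} (hnk : n < k) :
    expansionCoeff σ v h n k = 0 := by
  induction n generalizing k with
  | zero =>
    obtain ⟨k, rfl⟩ := Nat.exists_eq_add_one_of_ne_zero hnk.ne'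
    rfl
  | succ n ih =>
    obtain ⟨k, rfl⟩ := Nat.exists_eq_add_one_of_ne_zero (by omega : k ≠ 0)
    funext s x y
    simp [expansionCoeff, twistedDiff, ih (k := k + 1) (by omega), ih (k := k) (by omega)]

lemma expansionCoeff_zero_right (v : ℂ → X → Y → ℂ) (h : ℂ) {n : ℕ} (hn : n ≠ 0) :
    expansionCoeff σ v h n 0 = 0 := by
  obtain ⟨n, rfl⟩ := Nat.exists_eq_add_one_of_ne_zero hn
  induction n with
  | zero => exact twistedDiff_one_const σ 1
  | succ n ih =>
    change twistedDiff σ 1 (expansionCoeff σ v h (n + 1) 0) = 0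
    rw [ih (Nat.succ_ne_zero n)]
    exact twistedDiff_one_const σ 0

theorem iterate_twistedDiff_eq_sum {t lam h : ℂ} {v W : ℂ → X → Y → ℂ}
    (hW : ∀ s x y, twistedDiff σ t W s x y = lam * v s x y * W (s + h) x y) (n : ℕ) :
    (twistedDiff σ t)^[n] W = fun s x y =>
      ∑ k ∈ range (n + 1), expansionCoeff σ v h n k s x y * lam ^ k * W (s + k * h) x y := by
  induction n with
  | zero => funext s x y; simp [expansionCoeff]
  | succ n ih =>
    funext s x y
    set q := expansionCoeff σ v h
    have hterm : ∀ k, twistedDiff σ t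
        (fun s x y => q n k s x y * lam ^ k * W (s + k * h) x y) s x y
          = twistedDiff σ 1 (q n k) s x y * lam ^ k * W (s + k * h) x y
            + q n k s (σ x) y * v (s + k * h) x y * lam ^ (k + 1)
              * W (s + (k + 1 : ℕ) * h) x y := by
      -- Leibniz rule `D_t (q g) = (D_1 q) g + (q ∘ σ) (D_t g)`, then `hW`
      intro k
      have hWk := hW (s + k * h) x y
      simp only [twistedDiff] at hWk ⊢
      rw [Nat.cast_succ, add_one_mul, ← add_assoc]
      linear_combination (q n k s (σ x) y * lam ^ k) * hWk
    have htop : twistedDiff σ 1 (q n (n + 1)) = 0 := by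
      rw [show q n (n + 1) = 0 from expansionCoeff_eq_zero_of_lt v h (lt_add_one n)]
      exact twistedDiff_one_const σ 0
    rw [iterate_succ_apply', ih]
    calc twistedDiff σ t (fun s x y => ∑ k ∈ range (n + 1),
            q n k s x y * lam ^ k * W (s + k * h) x y) s x y
        = ∑ k ∈ range (n + 1), twistedDiff σ t
            (fun s x y => q n k s x y * lam ^ k * W (s + k * h) x y) s x y := by
          simp only [twistedDiff, mul_sum, sum_sub_distrib]
      _ = _ := by
          -- the recursion for `expansionCoeff` is the reindexing `k ↦ k + 1` of the second sum
          simp only [hterm, sum_add_distrib]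
          rw [sum_range_succ' _ (n + 1)]
          simp only [q, expansionCoeff, add_mul, sum_add_distrib]
          rw [sum_range_succ' _ n, sum_range_succ _ n, sum_range_succ _ n, htop]
          simp only [Pi.zero_apply, zero_mul, add_zero]
          ring

theorem iterate_twistedDiff_eq_sum_Icc {t lam h : ℂ} {v W : ℂ → X → Y → ℂ}
    (hW : ∀ s x y, twistedDiff σ t W s x y = lam * v s x y * W (s + h) x y) {n : ℕ}
    (hn : n ≠ 0) (s : ℂ) (x : X) (y : Y) :
    (twistedDiff σ t)^[n] W s x y
      = ∑ k ∈ Icc 1 n, expansionCoeff σ v h n k s x y * lam ^ k * W (s + k * h) x y := by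
  simp only [iterate_twistedDiff_eq_sum hW]
  rw [range_eq_Ico, sum_eq_sum_Ico_succ_bot (Nat.add_one_pos n), Ico_add_one_right_eq_Icc,
    expansionCoeff_zero_right v h hn]
  simp

end TwistedDifference

section Fay

variable {h : ℂ} {τ : ℂ → (ℕ+ → ℂ) → (ℕ+ → ℂ) → ℂ}

lemma shift_comm (x : ℕ+ → ℂ) (a b : ℂ) :
    shift h (shift h x a) b = shift h (shift h x b) a := by
  funext n
  simp only [shift]
  ring

lemma twistedDiff_swp (hτ : ∀ s x y, τ s x y ≠ 0) (hA : FayA h τ) {μ lam : ℂ} (hμ : μ ≠ 0)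
    (hlam : lam ≠ 0) (s : ℂ) (x y : ℕ+ → ℂ) :
    twistedDiff (shift h · μ⁻¹) (1 - lam / μ) (fun s x y => swp h τ s x y lam) s x y
      = lam * vp h τ s x y μ * swp h τ (s + h) x y lam := by
  have hA' := hA s x y lam μ hlam hμ
  rw [shift_comm x lam⁻¹ μ⁻¹] at hA'
  simp only [twistedDiff, swp, vp, show s + h + h = s + 2 * h by ring]
  field_simp [hτ]
  -- `field_simp` also turns `μ⁻¹`, `lam⁻¹` inside the arguments of `τ` into `1 / μ`, `1 / lam`
  simp only [one_div]
  linear_combination hA'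

lemma twistedDiff_swm (hτ : ∀ s x y, τ s x y ≠ 0) (hC : FayC h τ) {μ lam : ℂ} (hμ : μ ≠ 0)
    (hlam : lam ≠ 0) (s : ℂ) (x y : ℕ+ → ℂ) :
    twistedDiff (shift h · μ⁻¹) 1 (fun s x y => swm h τ s x y lam) s x y
      = lam * vp h τ s x y μ * swm h τ (s + h) x y lam := by
  have hC' := hC (s + h) x y μ lam hμ hlam
  rw [show s + h + h = s + 2 * h by ring, add_sub_cancel_right] at hC'
  simp only [twistedDiff, swm, vp, one_mul, show s + h + h = s + 2 * h by ring]
  field_simp [hτ]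
  simp only [one_div, mul_comm h 2]
  linear_combination hC'

end Fay

theorem fay_implies_iterated_X_expansion_general
    (h : ℂ)
    (τ : ℂ → (ℕ+ → ℂ) → (ℕ+ → ℂ) → ℂ) (hτ : ∀ s x y, τ s x y ≠ 0)
    (hA : FayA h τ) (hC : FayC h τ)
    (μ : ℂ) (hμ : μ ≠ 0) (n : ℕ) (hn : 1 ≤ n) :
    ∃ q : ℕ → ℂ → (ℕ+ → ℂ) → (ℕ+ → ℂ) → ℂ,
      ∀ lam : ℂ, lam ≠ 0 → ∀ (s : ℂ) (x y : ℕ+ → ℂ),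
        ((Xtw h μ lam)^[n] (fun s x y => swp h τ s x y lam) s x y
            = ∑ k ∈ Finset.Icc 1 n,
                q k s x y * lam ^ k * swp h τ (s + (k : ℂ) * h) x y lam)
        ∧ ((Xun h μ)^[n] (fun s x y => swm h τ s x y lam) s x y
            = ∑ k ∈ Finset.Icc 1 n,
                q k s x y * lam ^ k * swm h τ (s + (k : ℂ) * h) x y lam) := by
  have hn : n ≠ 0 := Nat.one_le_iff_ne_zero.mp hn
  refine ⟨expansionCoeff (shift h · μ⁻¹) (fun s x y => vp h τ s x y μ) h n,
    fun lam hlam s x y => ⟨?_, ?_⟩⟩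
  · exact iterate_twistedDiff_eq_sum_Icc (twistedDiff_swp hτ hA hμ hlam) hn s x y
  · have hXun : Xun h μ = twistedDiff (shift h · μ⁻¹) 1 := by
      funext g s x y
      simp [Xun, twistedDiff]
    rw [hXun]
    exact iterate_twistedDiff_eq_sum_Icc (twistedDiff_swm hτ hC hμ hlam) hn s x y

/-- Expansion of `X[μ]ⁿ` applied to `𝗌w⁺` and `𝘄⁻`, with common coefficients. -/
theorem fay_implies_iterated_X_expansion
    (h : ℂ) (hh : h ≠ 0)
    (τ : ℂ → (ℕ+ → ℂ) → (ℕ+ → ℂ) → ℂ) (hτ : ∀ s x y, τ s x y ≠ 0)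
    (hA : FayA h τ) (hC : FayC h τ)
    (μ : ℂ) (hμ : μ ≠ 0) (n : ℕ) (hn : 1 ≤ n) :
    ∃ q : ℕ → ℂ → (ℕ+ → ℂ) → (ℕ+ → ℂ) → ℂ,
      ∀ lam : ℂ, lam ≠ 0 → ∀ (s : ℂ) (x y : ℕ+ → ℂ),
        ((Xtw h μ lam)^[n] (fun s x y => swp h τ s x y lam) s x y
            = ∑ k ∈ Finset.Icc 1 n,
                q k s x y * lam ^ k * swp h τ (s + (k : ℂ) * h) x y lam)
        ∧ ((Xun h μ)^[n] (fun s x y => swm h τ s x y lam) s x y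
            = ∑ k ∈ Finset.Icc 1 n,
                q k s x y * lam ^ k * swm h τ (s + (k : ℂ) * h) x y lam) :=
  fay_implies_iterated_X_expansion_general h τ hτ hA hC μ hμ n hn
end
end
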